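/- arXiv:1609.03349 — 2 statements merged into one kernel-verified Lean document; each statement's English description precedes it below -/
import Mathlib

section
/- The function x ↦ (1-2^{-x})^x is strictly increasing for x > 1/log 2. -/
/-!
Write `b ^ (-x) = exp (-y)` with `y = x log b`; then `(1 - b ^ (-x)) ^ x = exp (φ y / log b)` with
`φ y = y log (1 - exp (-y))`, so it suffices that `φ` increases for `y > 1`. Its derivative is
`log (1 - exp (-y)) + y s` with `s = exp (-y) / (1 - exp (-y))`, and `log u ≥ 1 - u⁻¹` at
`u = 1 - exp (-y)` gives `log (1 - exp (-y)) ≥ -s`, so the derivative is at least `(y - 1) s > 0`.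
-/

open Real Set

lemma hasDerivAt_mul_log_one_sub_exp_neg {x : ℝ} (hx : x ≠ 0) :
    HasDerivAt (fun y => y * log (1 - exp (-y)))
      (log (1 - exp (-x)) + x * (exp (-x) / (1 - exp (-x)))) x := by
  have hne : 1 - exp (-x) ≠ 0 := sub_ne_zero.mpr fun h => hx (by simpa using h.symm)
  have hinner : HasDerivAt (fun y => 1 - exp (-y)) (exp (-x)) x := by
    simpa using ((hasDerivAt_neg x).exp).const_sub 1
  simpa using (hasDerivAt_id x).fun_mul (hinner.log hne)

lemma log_one_sub_exp_neg_add_mul_pos {x : ℝ} (hx : 1 < x) :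
    0 < log (1 - exp (-x)) + x * (exp (-x) / (1 - exp (-x))) := by
  have hu : 0 < 1 - exp (-x) := sub_pos.mpr (exp_lt_one_iff.mpr (by linarith))
  set s := exp (-x) / (1 - exp (-x))
  have hs : 0 < s := div_pos (exp_pos _) hu
  have hlog : -s ≤ log (1 - exp (-x)) := by
    have heq : 1 - (1 - exp (-x))⁻¹ = -s := by
      simp only [s]
      field_simp
      ring
    exact heq ▸ one_sub_inv_le_log_of_pos hu
  have hgap : 0 < (x - 1) * s := mul_pos (by linarith) hs
  linarith

lemma strictMonoOn_mul_log_one_sub_exp_neg :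
    StrictMonoOn (fun y => y * log (1 - exp (-y))) (Ioi 1) := by
  have hderiv : ∀ x ∈ Ioi (1 : ℝ), HasDerivAt (fun y => y * log (1 - exp (-y)))
      (log (1 - exp (-x)) + x * (exp (-x) / (1 - exp (-x)))) x :=
    fun x hx => hasDerivAt_mul_log_one_sub_exp_neg (by linarith [mem_Ioi.mp hx])
  refine strictMonoOn_of_hasDerivWithinAt_pos (convex_Ioi 1)
    (f' := fun x => log (1 - exp (-x)) + x * (exp (-x) / (1 - exp (-x))))
    (fun x hx => (hderiv x hx).continuousAt.continuousWithinAt) (fun x hx => ?_) (fun x hx => ?_)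
  · rw [interior_Ioi] at hx ⊢
    exact (hderiv x hx).hasDerivWithinAt
  · rw [interior_Ioi] at hx
    exact log_one_sub_exp_neg_add_mul_pos hx

lemma one_sub_rpow_neg_rpow_eq_exp {b x : ℝ} (hb : 0 < b) (hx : 0 < x * log b) :
    (1 - b ^ (-x)) ^ x = exp (x * log (1 - exp (-(x * log b)))) := by
  have hpow : b ^ (-x) = exp (-(x * log b)) := by
    rw [rpow_def_of_pos hb]
    ring_nf
  have hu : 0 < 1 - b ^ (-x) := by
    rw [hpow, sub_pos]
    exact exp_lt_one_iff.mpr (by linarith)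
  rw [rpow_def_of_pos hu, hpow, mul_comm]

theorem strictMonoOn_one_sub_rpow_neg {b : ℝ} (hb : 1 < b) :
    StrictMonoOn (fun x : ℝ => (1 - b ^ (-x)) ^ x) (Ioi (1 / log b)) := by
  intro x hx y hy hxy
  have hlog : 0 < log b := log_pos hb
  have hx' : 1 < x * log b := (div_lt_iff₀ hlog).mp hx
  have hy' : 1 < y * log b := (div_lt_iff₀ hlog).mp hy
  have hφ := strictMonoOn_mul_log_one_sub_exp_neg hx' hy' (mul_lt_mul_of_pos_right hxy hlog)
  dsimp only
  rw [one_sub_rpow_neg_rpow_eq_exp (zero_lt_one.trans hb) (by linarith),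
    one_sub_rpow_neg_rpow_eq_exp (zero_lt_one.trans hb) (by linarith), exp_lt_exp]
  calc x * log (1 - exp (-(x * log b)))
      = x * log b * log (1 - exp (-(x * log b))) / log b := by field_simp
    _ < y * log b * log (1 - exp (-(y * log b))) / log b := div_lt_div_of_pos_right hφ hlog
    _ = y * log (1 - exp (-(y * log b))) := by field_simp

theorem strictMonoOn_one_sub_two_rpow_neg :
    StrictMonoOn (fun x : ℝ => (1 - (2 : ℝ) ^ (-x)) ^ x)
      (Set.Ioi (1 / Real.log 2)) :=
  strictMonoOn_one_sub_rpow_neg one_lt_two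
end

section
/- The function x ↦ ((1+2^{-x})/(1-2^{-x}))^x is strictly decreasing for x > 1/log 2. -/
/-!
Put `t = b ^ (-x) ∈ (0, 1)`, so the function is `exp (x * L t)` with
`L t = log (1 + t) - log (1 - t)`. The exponent has derivative `L t - x log b · 2t / (1 - t²)`.
Since `sinh (L t) = 2t / (1 - t²)` and `y < sinh y` for `y > 0`, we get `L t < 2t / (1 - t²)`,
so the derivative is negative as soon as `x log b > 1`.
-/

open Real Set

lemma Real.log_one_add_sub_log_one_sub_lt {t : ℝ} (ht₀ : 0 < t) (ht₁ : t < 1) :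
    log (1 + t) - log (1 - t) < 2 * t / (1 - t ^ 2) := by
  have hsinh : sinh (log ((1 + t) / (1 - t))) = 2 * t / (1 - t ^ 2) := by
    rw [sinh_log (by apply div_pos <;> linarith), inv_div,
      show 1 - t ^ 2 = (1 + t) * (1 - t) by ring]
    field_simp [show 1 - t ≠ 0 by linarith, show 1 + t ≠ 0 by linarith]
    ring
  rw [← log_div (by linarith) (by linarith), ← hsinh, self_lt_sinh_iff]
  exact log_pos <| (one_lt_div (by linarith)).2 (by linarith)

lemma Real.hasDerivAt_log_one_add_sub_log_one_sub {t : ℝ} (ht₀ : -1 < t) (ht₁ : t < 1) :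
    HasDerivAt (fun s => log (1 + s) - log (1 - s)) (2 / (1 - t ^ 2)) t := by
  refine ((((hasDerivAt_id' t).const_add 1).log (by linarith)).sub
    (((hasDerivAt_id' t).const_sub 1).log (by linarith))).congr_deriv ?_
  rw [show 1 - t ^ 2 = (1 + t) * (1 - t) by ring]
  field_simp [show 1 - t ≠ 0 by linarith, show 1 + t ≠ 0 by linarith]
  ring

section RatioRpowNeg

variable {b x : ℝ}

lemma rpow_neg_mem_Ioo (hb : 1 < b) (hx : 0 < x) : b ^ (-x) ∈ Ioo 0 1 :=
  ⟨rpow_pos_of_pos (by linarith) _, rpow_lt_one_of_one_lt_of_neg hb (by linarith)⟩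

lemma pos_of_one_div_log_lt (hb : 1 < b) (hx : 1 / log b < x) : 0 < x :=
  lt_trans (by have := log_pos hb; positivity) hx

lemma hasDerivAt_mul_log_ratio_rpow_neg (hb : 1 < b) (hx : 0 < x) :
    HasDerivAt (fun x => x * (log (1 + b ^ (-x)) - log (1 - b ^ (-x))))
      (log (1 + b ^ (-x)) - log (1 - b ^ (-x)) -
        x * log b * (2 * b ^ (-x) / (1 - (b ^ (-x)) ^ 2))) x := by
  obtain ⟨ht₀, ht₁⟩ := rpow_neg_mem_Ioo hb hx
  have hpow : HasDerivAt (fun x => b ^ (-x)) (b ^ (-x) * log b * -1) x :=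
    (hasStrictDerivAt_const_rpow (by linarith) (-x)).hasDerivAt.comp x (hasDerivAt_neg x)
  refine ((hasDerivAt_id' x).mul
    ((hasDerivAt_log_one_add_sub_log_one_sub (by linarith) ht₁).comp x hpow)).congr_deriv ?_
  simp only [Function.comp_apply]
  ring

lemma mul_log_ratio_rpow_neg_deriv_neg (hb : 1 < b) (hx : 1 / log b < x) :
    log (1 + b ^ (-x)) - log (1 - b ^ (-x)) -
        x * log b * (2 * b ^ (-x) / (1 - (b ^ (-x)) ^ 2)) < 0 := by
  have hlog : 0 < log b := log_pos hb
  have hx₁ : 1 < x * log b := by rwa [div_lt_iff₀ hlog] at hx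
  obtain ⟨ht₀, ht₁⟩ := rpow_neg_mem_Ioo hb (pos_of_one_div_log_lt hb hx)
  have hq : 0 < 2 * b ^ (-x) / (1 - (b ^ (-x)) ^ 2) := by
    apply div_pos <;> nlinarith
  nlinarith [log_one_add_sub_log_one_sub_lt ht₀ ht₁]

lemma strictAntiOn_mul_log_ratio_rpow_neg (hb : 1 < b) :
    StrictAntiOn (fun x => x * (log (1 + b ^ (-x)) - log (1 - b ^ (-x)))) (Ioi (1 / log b)) := by
  have hderiv := fun x (hx : x ∈ Ioi (1 / log b)) =>
    hasDerivAt_mul_log_ratio_rpow_neg hb (pos_of_one_div_log_lt hb hx)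
  refine strictAntiOn_of_deriv_neg (convex_Ioi _)
    (fun x hx => (hderiv x hx).continuousAt.continuousWithinAt) fun x hx => ?_
  rw [interior_Ioi] at hx
  rw [(hderiv x hx).deriv]
  exact mul_log_ratio_rpow_neg_deriv_neg hb hx

lemma ratio_rpow_neg_rpow_eq_exp (hb : 1 < b) (hx : 0 < x) :
    ((1 + b ^ (-x)) / (1 - b ^ (-x))) ^ x =
      exp (x * (log (1 + b ^ (-x)) - log (1 - b ^ (-x)))) := by
  obtain ⟨ht₀, ht₁⟩ := rpow_neg_mem_Ioo hb hx
  rw [rpow_def_of_pos (by apply div_pos <;> linarith), log_div (by linarith) (by linarith),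
    mul_comm]

theorem strictAntiOn_ratio_rpow_neg (hb : 1 < b) :
    StrictAntiOn (fun x : ℝ => ((1 + b ^ (-x)) / (1 - b ^ (-x))) ^ x) (Ioi (1 / log b)) := by
  intro x hx y hy hxy
  dsimp only
  rw [ratio_rpow_neg_rpow_eq_exp hb (pos_of_one_div_log_lt hb hx),
    ratio_rpow_neg_rpow_eq_exp hb (pos_of_one_div_log_lt hb hy)]
  exact exp_lt_exp.2 (strictAntiOn_mul_log_ratio_rpow_neg hb hx hy hxy)

end RatioRpowNeg

theorem strictAntiOn_ratio_two_rpow_neg :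
    StrictAntiOn (fun x : ℝ => ((1 + (2 : ℝ) ^ (-x)) / (1 - (2 : ℝ) ^ (-x))) ^ x)
      (Set.Ioi (1 / Real.log 2)) :=
  strictAntiOn_ratio_rpow_neg one_lt_two
end
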